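/- There exists an infinite square-free word over the alphabet {0,1,2} that avoids the factors 010 and 212. -/

import Mathlib

/-!
Let `t` be the Thue–Morse word, `t (2n) = t n` and `t (2n+1) = ¬ t n`. The Hall–Thue word is
the sequence of its first differences `c n = 1 + t n - t (n+1)`. A letter `0` or `2` of `c`
fixes both neighbouring bits of `t`, so `010` and `212` cannot occur. A square of period `k`
in `c` at position `i` makes `t (n + k) - t n` constant for `n ∈ [i, i + k]`, and comparing its
values at both ends shows the constant is `0`: `t` has an overlap of period `k`. But `t` is
overlap-free: an even period `2q` descends to an overlap of period `q`, and an odd period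
propagates `t (2m) ≠ t (2m+1)` to all positions, so `t` alternates and cannot repeat at an
odd distance.
-/

def SqFree {α : Type*} (w : List α) : Prop :=
  ∀ v : List α, v ≠ [] → ¬ (v ++ v) <:+: w

def Reduced (w : List (Fin 4)) : Prop :=
  ∀ p ∈ ([[0,2],[2,0],[1,3],[3,1]] : List (List (Fin 4))), ¬ p <:+: w

def DeanWord (w : List (Fin 4)) : Prop := Reduced w ∧ SqFree w

def IFactor {α : Type*} (v : List α) (w : ℕ → α) : Prop :=
  ∃ i, v = (List.range v.length).map fun k => w (i + k)

def ISqFree {α : Type*} (w : ℕ → α) : Prop :=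
  ∀ v : List α, v ≠ [] → ¬ IFactor (v ++ v) w

def IReduced (w : ℕ → Fin 4) : Prop :=
  ∀ p ∈ ([[0,2],[2,0],[1,3],[3,1]] : List (List (Fin 4))), ¬ IFactor p w

def IDean (w : ℕ → Fin 4) : Prop := IReduced w ∧ ISqFree w

theorem IFactor.exists_of_square {α : Type*} {v : List α} {w : ℕ → α} (h : IFactor (v ++ v) w) :
    ∃ i, ∀ j < v.length, w (i + j) = w (i + j + v.length) := by
  obtain ⟨i, hi⟩ := h
  refine ⟨i, fun j hj => ?_⟩
  have e₁ := List.getElem_of_eq hi (i := j) (by simp; omega)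
  have e₂ := List.getElem_of_eq hi (i := j + v.length) (by simp; omega)
  simp only [List.getElem_append_left hj, List.getElem_append_right (Nat.le_add_left _ _),
    Nat.add_sub_cancel, List.getElem_map, List.getElem_range] at e₁ e₂
  rw [e₁] at e₂
  rw [e₂, add_assoc]

theorem iFactor_triple_iff {α : Type*} {a b c : α} {w : ℕ → α} :
    IFactor [a, b, c] w ↔ ∃ i, w i = a ∧ w (i + 1) = b ∧ w (i + 2) = c := by
  simp [IFactor, List.range_succ, eq_comm]

theorem apply_add_eq_xor_of_alternating {f : ℕ → Bool} {i p : ℕ}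
    (h : ∀ j < p, f (i + j + 1) = !f (i + j)) : f (i + p) = (f i ^^ decide (Odd p)) := by
  induction p with
  | zero => simp
  | succ p ih =>
    rw [← add_assoc, h p p.lt_succ_self, ih fun j hj => h j (by omega)]
    simp only [Nat.odd_add_one, decide_not, Bool.bne_not]

def thueMorse : ℕ → Bool
  | 0 => false
  | n + 1 => ((n + 1) % 2 == 1) ^^ thueMorse ((n + 1) / 2)

theorem thueMorse_two_mul (n : ℕ) : thueMorse (2 * n) = thueMorse n := by
  rcases n with _ | n
  · rfl
  · rw [show 2 * (n + 1) = (2 * n + 1) + 1 by ring, thueMorse]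
    simp [show (2 * n + 1 + 1) / 2 = n + 1 by omega, show (2 * n + 1 + 1) % 2 = 0 by omega]

theorem thueMorse_two_mul_add_one (n : ℕ) : thueMorse (2 * n + 1) = !thueMorse n := by
  rw [thueMorse]
  simp [show (2 * n + 1) / 2 = n by omega, show (2 * n + 1) % 2 = 1 by omega]

theorem thueMorse_succ_of_even {n : ℕ} (hn : Even n) : thueMorse (n + 1) = !thueMorse n := by
  obtain ⟨m, rfl⟩ := hn
  rw [← two_mul, thueMorse_two_mul_add_one, thueMorse_two_mul]

theorem thueMorse_overlapFree {p : ℕ} (hp : 0 < p) (i : ℕ) :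
    ¬ ∀ j ≤ p, thueMorse (i + j) = thueMorse (i + j + p) := by
  induction p using Nat.strong_induction_on generalizing i with
  | _ p ih =>
    intro h
    rcases Nat.even_or_odd p with ⟨q, rfl⟩ | hodd
    · obtain ⟨m, rfl | rfl⟩ := Nat.even_or_odd' i <;>
        refine ih q (by omega) (by omega) m fun j hj => ?_ <;>
        have hij := h (2 * j) (by omega)
      · rwa [show 2 * m + 2 * j = 2 * (m + j) by ring,
          show 2 * (m + j) + (q + q) = 2 * (m + j + q) by ring, thueMorse_two_mul,
          thueMorse_two_mul] at hij
      · rwa [show 2 * m + 1 + 2 * j = 2 * (m + j) + 1 by ring,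
          show 2 * (m + j) + 1 + (q + q) = 2 * (m + j + q) + 1 by ring,
          thueMorse_two_mul_add_one, thueMorse_two_mul_add_one, Bool.not_inj_iff] at hij
    · -- an odd period carries `t (2m) ≠ t (2m+1)` to the odd positions, so `t` alternates
      have hstep : ∀ j < p, thueMorse (i + j + 1) = !thueMorse (i + j) := by
        intro j hj
        rcases Nat.even_or_odd (i + j) with he | ho
        · exact thueMorse_succ_of_even he
        · have hnext := h (j + 1) hj
          rw [← add_assoc] at hnext
          rw [hnext, h j hj.le, show i + j + 1 + p = i + j + p + 1 by ring]
          exact thueMorse_succ_of_even (ho.add_odd hodd)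
      have hfirst := h 0 hp.le
      rw [add_zero, apply_add_eq_xor_of_alternating hstep] at hfirst
      simp [hodd] at hfirst

def hallThue (n : ℕ) : Fin 3 :=
  ⟨1 + (thueMorse n).toNat - (thueMorse (n + 1)).toNat, by
    have := Bool.toNat_le (thueMorse n); omega⟩

theorem hallThue_val (n : ℕ) :
    (hallThue n : ℕ) = 1 + (thueMorse n).toNat - (thueMorse (n + 1)).toNat := rfl

theorem hallThue_eq_iff {m n : ℕ} : hallThue m = hallThue n ↔
    (thueMorse m).toNat + (thueMorse (n + 1)).toNat =
      (thueMorse (m + 1)).toNat + (thueMorse n).toNat := by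
  have := Bool.toNat_le (thueMorse m)
  have := Bool.toNat_le (thueMorse (m + 1))
  have := Bool.toNat_le (thueMorse n)
  have := Bool.toNat_le (thueMorse (n + 1))
  rw [Fin.ext_iff, hallThue_val, hallThue_val]
  omega

theorem hallThue_sqFree : ISqFree hallThue := by
  intro v hv hsq
  obtain ⟨i, hper⟩ := hsq.exists_of_square
  have hk : 0 < v.length := List.length_pos_iff.mpr hv
  generalize v.length = k at hper hk
  have bit_le (n : ℕ) : (thueMorse n).toNat ≤ 1 := Bool.toNat_le _
  -- `t (i + j + k) - t (i + j)` does not depend on `j ≤ k`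
  have hdiff : ∀ j ≤ k, (thueMorse (i + j + k)).toNat + (thueMorse i).toNat =
      (thueMorse (i + j)).toNat + (thueMorse (i + k)).toNat := by
    intro j hj
    induction j with
    | zero => simp [add_comm]
    | succ j ih =>
      have hstep := hallThue_eq_iff.mp (hper j (by omega))
      have := ih (by omega)
      rw [← add_assoc, show i + j + 1 + k = i + j + k + 1 by ring]
      omega
  have hends := hdiff k le_rfl
  refine thueMorse_overlapFree hk i fun j hj => ?_
  have := hdiff j hj
  have := bit_le i
  have := bit_le (i + k)
  have := bit_le (i + k + k)
  apply Function.LeftInverse.injective Bool.ofNat_toNat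
  omega

theorem hallThue_eq_zero_iff {n : ℕ} :
    hallThue n = 0 ↔ thueMorse n = false ∧ thueMorse (n + 1) = true := by
  rw [Fin.ext_iff, hallThue_val]
  cases thueMorse n <;> cases thueMorse (n + 1) <;> simp

theorem hallThue_eq_one_iff {n : ℕ} : hallThue n = 1 ↔ thueMorse (n + 1) = thueMorse n := by
  rw [Fin.ext_iff, hallThue_val]
  cases thueMorse n <;> cases thueMorse (n + 1) <;> simp

theorem hallThue_eq_two_iff {n : ℕ} :
    hallThue n = 2 ↔ thueMorse n = true ∧ thueMorse (n + 1) = false := by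
  rw [Fin.ext_iff, hallThue_val]
  cases thueMorse n <;> cases thueMorse (n + 1) <;> simp

theorem hallThue_not_iFactor_010 : ¬ IFactor ([0, 1, 0] : List (Fin 3)) hallThue := by
  rw [iFactor_triple_iff]
  rintro ⟨i, h0, h1, h2⟩
  rw [hallThue_eq_zero_iff] at h0 h2
  rw [hallThue_eq_one_iff] at h1
  simp_all

theorem hallThue_not_iFactor_212 : ¬ IFactor ([2, 1, 2] : List (Fin 3)) hallThue := by
  rw [iFactor_triple_iff]
  rintro ⟨i, h0, h1, h2⟩
  rw [hallThue_eq_two_iff] at h0 h2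
  rw [hallThue_eq_one_iff] at h1
  simp_all

theorem stmt0 :
    ∃ w : ℕ → Fin 3, ISqFree w ∧
      ¬ IFactor ([0,1,0] : List (Fin 3)) w ∧ ¬ IFactor ([2,1,2] : List (Fin 3)) w :=
  ⟨hallThue, hallThue_sqFree, hallThue_not_iFactor_010, hallThue_not_iFactor_212⟩
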